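/- arXiv:2510.03607 — 5 statements merged into one kernel-verified Lean document; each statement's English description precedes it below -/
import Mathlib

section
/- Let φ : Ω → L(E) be continuous with respect to the strong operator topology on L(E). The multiplication operator M_φ, defined by (M_φ s)(x) = φ(x)(s(x)) on the domain D(M_φ) = { s ∈ C_0(Ω, E) : φ(·)s(·) ∈ C_0(Ω, E) }, is a closed linear operator on C_0(Ω, E). -/
open ZeroAtInfty Filter Topology

/-- The multiplication operator `M_φ` induced on `C₀(Ω, E)` by a strongly continuous
`φ : Ω → L(E)`, with maximal domain `D(M_φ) = {s | φ(·)s(·) ∈ C₀(Ω, E)}`, is closed: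
if `sₙ ∈ D(M_φ)`, `sₙ → s` and `M_φ sₙ → u` in `C₀(Ω, E)`, then `s ∈ D(M_φ)` and
`M_φ s = u`. -/
theorem multiplication_operator_closed (Ω E : Type*) [TopologicalSpace Ω]
    [LocallyCompactSpace Ω] [T2Space Ω] [NormedAddCommGroup E] [NormedSpace ℝ E]
    [CompleteSpace E] (φ : Ω → (E →L[ℝ] E)) (hφ : ∀ z : E, Continuous fun x => φ x z)
    (s : ℕ → C₀(Ω, E)) (u : ℕ → C₀(Ω, E)) (hmem : ∀ n, ∀ x, u n x = φ x (s n x))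
    (S U : C₀(Ω, E)) (hS : Tendsto s atTop (𝓝 S)) (hU : Tendsto u atTop (𝓝 U)) :
    ∀ x, U x = φ x (S x) := by
  intro x
  have key : ∀ (f : C₀(Ω, E)) (y : Ω), ‖f y‖ ≤ ‖f‖ := fun f y => by
    rw [← ZeroAtInftyContinuousMap.norm_toBCF_eq_norm]
    exact f.toBCF.norm_coe_le_norm y
  have hs : Tendsto (fun n => s n x) atTop (𝓝 (S x)) := by
    rw [tendsto_iff_norm_sub_tendsto_zero] at hS ⊢
    exact squeeze_zero (fun n => norm_nonneg _)
      (fun n => key (s n - S) x) hS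
  have hu : Tendsto (fun n => u n x) atTop (𝓝 (U x)) := by
    rw [tendsto_iff_norm_sub_tendsto_zero] at hU ⊢
    exact squeeze_zero (fun n => norm_nonneg _)
      (fun n => key (u n - U) x) hU
  have h2 : Tendsto (fun n => u n x) atTop (𝓝 (φ x (S x))) := by
    simp only [hmem]
    exact ((φ x).continuous.tendsto _).comp hs
  exact tendsto_nhds_unique hu h2
end

section
/- Let φ : Ω → L(E) be continuous for the strong operator topology. The domain D(M_φ) = { s ∈ C_0(Ω, E) : φ(·)s(·) ∈ C_0(Ω, E) } of the multiplication operator M_φ contains C_c(Ω, E), and hence is dense in C_0(Ω, E). -/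
open ZeroAtInfty

open Filter Topology in
lemma cont_apply_aux {Ω E : Type*} [TopologicalSpace Ω] [LocallyCompactSpace Ω]
    [NormedAddCommGroup E] [NormedSpace ℝ E] [CompleteSpace E]
    (φ : Ω → (E →L[ℝ] E)) (hφ : ∀ z : E, Continuous fun x => φ x z)
    {s : Ω → E} (hs : Continuous s) : Continuous fun x => φ x (s x) := by
  rw [continuous_iff_continuousAt]
  intro x₀
  obtain ⟨K, hK, hKn⟩ := exists_compact_mem_nhds x₀
  -- uniform bound on K via Banach–Steinhaus
  obtain ⟨C, hC⟩ : ∃ C, ∀ k : K, ‖φ (k : Ω)‖ ≤ C := by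
    apply banach_steinhaus (g := fun k : K => φ (k : Ω))
    intro z
    obtain ⟨M, hM⟩ := (hK.image (continuous_norm.comp (hφ z))).bddAbove
    exact ⟨M, fun k => hM ⟨k, k.2, rfl⟩⟩
  rw [ContinuousAt, tendsto_iff_norm_sub_tendsto_zero]
  have h1 : Tendsto (fun x => C * ‖s x - s x₀‖ + ‖φ x (s x₀) - φ x₀ (s x₀)‖)
      (𝓝 x₀) (𝓝 0) := by
    have t1 : Tendsto (fun x => C * ‖s x - s x₀‖) (𝓝 x₀) (𝓝 (C * ‖s x₀ - s x₀‖)) :=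
      (((hs.tendsto x₀).sub tendsto_const_nhds).norm.const_mul C)
    have t2 : Tendsto (fun x => ‖φ x (s x₀) - φ x₀ (s x₀)‖) (𝓝 x₀)
        (𝓝 ‖φ x₀ (s x₀) - φ x₀ (s x₀)‖) :=
      ((((hφ (s x₀)).tendsto x₀).sub tendsto_const_nhds).norm)
    simpa using t1.add t2
  refine squeeze_zero' (.of_forall fun x => norm_nonneg _) ?_ h1
  filter_upwards [hKn] with x hx
  calc ‖φ x (s x) - φ x₀ (s x₀)‖
      ≤ ‖φ x (s x) - φ x (s x₀)‖ + ‖φ x (s x₀) - φ x₀ (s x₀)‖ :=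
        norm_sub_le_norm_sub_add_norm_sub _ _ _
    _ ≤ C * ‖s x - s x₀‖ + ‖φ x (s x₀) - φ x₀ (s x₀)‖ := by
        gcongr
        calc ‖φ x (s x) - φ x (s x₀)‖ = ‖φ x (s x - s x₀)‖ := by rw [map_sub]
          _ ≤ ‖φ x‖ * ‖s x - s x₀‖ := (φ x).le_opNorm _
          _ ≤ C * ‖s x - s x₀‖ := by
              have := hC ⟨x, hx⟩
              gcongr

/-- The maximal domain `D(M_φ) = {s ∈ C₀(Ω, E) | φ(·)s(·) ∈ C₀(Ω, E)}` of the
multiplication operator induced by a strongly continuous `φ : Ω → L(E)` contains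
`C_c(Ω, E)` and is dense in `C₀(Ω, E)`. -/
theorem domain_contains_cc_and_dense (Ω E : Type*) [TopologicalSpace Ω]
    [LocallyCompactSpace Ω] [T2Space Ω] [NormedAddCommGroup E] [NormedSpace ℝ E]
    [CompleteSpace E] (φ : Ω → (E →L[ℝ] E)) (hφ : ∀ z : E, Continuous fun x => φ x z) :
    (∀ s : C₀(Ω, E), HasCompactSupport (⇑s : Ω → E) →
      ∃ u : C₀(Ω, E), ∀ x, u x = φ x (s x)) ∧
    Dense {s : C₀(Ω, E) | ∃ u : C₀(Ω, E), ∀ x, u x = φ x (s x)} := by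
  have key : ∀ s : C₀(Ω, E), HasCompactSupport (⇑s : Ω → E) →
      ∃ u : C₀(Ω, E), ∀ x, u x = φ x (s x) := by
    intro s hsc
    have hcont : Continuous fun x => φ x (s x) :=
      cont_apply_aux φ hφ (map_continuous s)
    have hsupp : HasCompactSupport fun x => φ x (s x) := by
      apply hsc.mono
      intro x hx
      simp only [Function.mem_support, ne_eq] at hx ⊢
      intro h
      exact hx (by rw [h, map_zero])
    exact ⟨⟨⟨_, hcont⟩, hsupp.is_zero_at_infty⟩, fun x => rfl⟩
  refine ⟨key, ?_⟩
  rw [Metric.dense_iff]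
  intro s ε hε
  -- find compact K outside which ‖s x‖ < ε/2
  have h0 : ∀ᶠ x in Filter.cocompact Ω, ‖s x‖ < ε / 2 := by
    have h := (zero_at_infty s).norm
    rw [norm_zero] at h
    exact h.eventually_lt_const (by positivity : (0:ℝ) < ε / 2)
  obtain ⟨K, hK, hKlt⟩ := (Filter.hasBasis_cocompact.eventually_iff).mp h0
  obtain ⟨g, hg1, _, hgc, hg01⟩ :=
    exists_continuous_one_zero_of_isCompact hK isClosed_empty (by simp)
  set t : C₀(Ω, E) := ⟨⟨fun x => g x • s x, (map_continuous g).smul (map_continuous s)⟩,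
    (hgc.smul_right (f := ⇑g) (f' := ⇑s)).is_zero_at_infty⟩ with ht
  have htc : HasCompactSupport (⇑t : Ω → E) := hgc.smul_right
  refine ⟨t, ?_, key t htc⟩
  rw [Metric.mem_ball]
  have hle : dist t s ≤ ε / 2 := by
    rw [← ZeroAtInftyContinuousMap.dist_toBCF_eq_dist]
    rw [BoundedContinuousFunction.dist_le (by positivity)]
    intro x
    show dist (g x • s x) (s x) ≤ ε / 2
    rw [dist_eq_norm]
    by_cases hx : x ∈ K
    · simp only [hg1 hx, Pi.one_apply, one_smul, sub_self, norm_zero]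
      positivity
    · have h1 : ‖g x • s x - s x‖ = ‖1 - g x‖ * ‖s x‖ := by
        rw [← norm_smul, sub_smul, one_smul, norm_sub_rev]
      rw [h1]
      have h2 : ‖(1:ℝ) - g x‖ ≤ 1 := by
        have := hg01 x
        rw [Real.norm_eq_abs, abs_le]
        constructor <;> simp at this ⊢ <;> linarith [this.1, this.2]
      calc ‖(1:ℝ) - g x‖ * ‖s x‖ ≤ 1 * ‖s x‖ := by gcongr
        _ ≤ ε / 2 := by rw [one_mul]; exact (hKlt hx).le
  linarith [hle, hε]
end

section
/- Suppose Ω is a nonempty locally compact Hausdorff space and φ : Ω → L(E) is strongly continuous and bounded. Then the operator norm of the induced multiplication operator M_φ on C_0(Ω, E) equals sup_{x∈Ω} ‖φ(x)‖_{L(E)}. -/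
open ZeroAtInfty

/-- For nonempty `Ω` and nontrivial `E`, the operator norm of the bounded multiplication
operator `M_φ` on `C₀(Ω, E)` induced by a strongly continuous bounded `φ : Ω → L(E)`
equals `⨆ x, ‖φ x‖`. -/
theorem multiplication_operator_norm (Ω E : Type*) [TopologicalSpace Ω]
    [LocallyCompactSpace Ω] [T2Space Ω] [Nonempty Ω] [NormedAddCommGroup E]
    [NormedSpace ℝ E] [CompleteSpace E] [Nontrivial E]
    (φ : Ω → (E →L[ℝ] E)) (hφ : ∀ z : E, Continuous fun x => φ x z)
    (hbdd : BddAbove (Set.range fun x => ‖φ x‖))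
    (Mφ : C₀(Ω, E) →L[ℝ] C₀(Ω, E)) (hMφ : ∀ s : C₀(Ω, E), ∀ x, Mφ s x = φ x (s x)) :
    ‖Mφ‖ = ⨆ x, ‖φ x‖ := by
  have hS0 : 0 ≤ ⨆ x, ‖φ x‖ := by
    obtain ⟨x₀⟩ := ‹Nonempty Ω›
    exact le_trans (norm_nonneg _) (le_ciSup hbdd x₀)
  apply le_antisymm
  · -- upper bound
    apply ContinuousLinearMap.opNorm_le_bound _ hS0
    intro s
    rw [← ZeroAtInftyContinuousMap.norm_toBCF_eq_norm]
    apply BoundedContinuousFunction.norm_le (by positivity) |>.mpr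
    intro x
    calc ‖(Mφ s) x‖ = ‖φ x (s x)‖ := by rw [hMφ]
      _ ≤ ‖φ x‖ * ‖s x‖ := (φ x).le_opNorm _
      _ ≤ (⨆ y, ‖φ y‖) * ‖s‖ := by
          apply mul_le_mul (le_ciSup hbdd x) ?_ (norm_nonneg _) hS0
          rw [← ZeroAtInftyContinuousMap.norm_toBCF_eq_norm]
          exact BoundedContinuousFunction.norm_coe_le_norm s.toBCF x
  · -- lower bound
    apply ciSup_le
    intro x
    refine ContinuousLinearMap.opNorm_le_bound (φ x) (norm_nonneg Mφ) fun z => ?_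
    -- build a compactly supported bump equal to 1 at x
    obtain ⟨f, hf1, -, hfc, hf01⟩ :=
      exists_continuous_one_zero_of_isCompact (isCompact_singleton (x := x))
        isClosed_empty (Set.disjoint_empty _)
    set s : C₀(Ω, E) :=
      { toFun := fun y => f y • z
        continuous_toFun := (map_continuous f).smul continuous_const
        zero_at_infty' := HasCompactSupport.is_zero_at_infty (hfc.smul_right) }
    have hsx : s x = z := by
      have : f x = 1 := hf1 rfl
      simp [s, this]
    have hsnorm : ‖s‖ ≤ ‖z‖ := by
      rw [← ZeroAtInftyContinuousMap.norm_toBCF_eq_norm]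
      apply BoundedContinuousFunction.norm_le (norm_nonneg z) |>.mpr
      intro y
      have h01 := hf01 y
      calc ‖f y • z‖ = |f y| * ‖z‖ := by rw [norm_smul, Real.norm_eq_abs]
        _ ≤ 1 * ‖z‖ := by
            apply mul_le_mul_of_nonneg_right _ (norm_nonneg z)
            rw [abs_le]; exact ⟨by linarith [h01.1], h01.2⟩
        _ = ‖z‖ := one_mul _
    calc ‖φ x z‖ = ‖(Mφ s) x‖ := by rw [hMφ, hsx]
      _ ≤ ‖Mφ s‖ := by
          rw [← ZeroAtInftyContinuousMap.norm_toBCF_eq_norm]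
          exact BoundedContinuousFunction.norm_coe_le_norm (Mφ s).toBCF x
      _ ≤ ‖Mφ‖ * ‖s‖ := Mφ.le_opNorm s
      _ ≤ ‖Mφ‖ * ‖z‖ := mul_le_mul_of_nonneg_left hsnorm (ContinuousLinearMap.opNorm_nonneg Mφ)
end

section
/- Let φ : Ω → L(E) be strongly continuous. A complex number λ belongs to the resolvent set of the multiplication operator (M_φ, D(M_φ)) on C_0(Ω, E) if and only if λ ∈ ρ(φ(x)) for all x ∈ Ω and sup_{x∈Ω} ‖(λ - φ(x))⁻¹‖_{L(E)} < ∞. Equivalently, σ(M_φ) = { λ ∈ ℂ : λ ∈ σ(φ(x)) for some x ∈ Ω, or sup_{x∈Ω} ‖(λ - φ(x))⁻¹‖ = ∞ }. -/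
/-!
If `T` inverts `λ - M_φ`, testing it on sections `f • z` with `f` an Urysohn bump concentrated
where `λ z - φ x z` is close to its value at `x₀` gives `‖z‖ ≤ ‖T‖ ‖(λ - φ x₀) z‖`, and
evaluating `T s` at `x₀` shows `λ - φ x₀` is onto; so each `λ - φ x` is invertible with
inverse of norm at most `‖T‖`. Conversely, bounded inverses `R x = (λ - φ x)⁻¹` of a strongly
continuous family are again strongly continuous, since
`R x z - R y z = R x ((φ x - φ y) (R y z))`, so pointwise application of `R` is a bounded
operator on `C₀(Ω, E)` inverting `λ - M_φ`.
-/

open ZeroAtInfty Filter Set Topology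

section Invertibility

variable {𝕜 E : Type*} [NontriviallyNormedField 𝕜] [NormedAddCommGroup E] [NormedSpace 𝕜 E]

namespace ContinuousLinearMap

theorem ring_inverse_apply_apply {A : E →L[𝕜] E} (hA : IsUnit A) (z : E) :
    Ring.inverse A (A z) = z := by
  simpa using congr($(Ring.inverse_mul_cancel A hA) z)

theorem apply_ring_inverse_apply {A : E →L[𝕜] E} (hA : IsUnit A) (z : E) :
    A (Ring.inverse A z) = z := by
  simpa using congr($(Ring.mul_inverse_cancel A hA) z)

theorem isUnit_of_surjective_of_bound {A : E →L[𝕜] E} {K : ℝ}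
    (hsurj : Function.Surjective A) (hbound : ∀ z, ‖z‖ ≤ K * ‖A z‖) : IsUnit A := by
  have hinj : Function.Injective A := (injective_iff_map_eq_zero A).2 fun z hz =>
    norm_le_zero_iff.1 (by simpa [hz] using hbound z)
  let e := LinearEquiv.ofBijective (A : E →ₗ[𝕜] E) ⟨hinj, hsurj⟩
  let e' := e.toContinuousLinearEquivOfBounds ‖A‖ K A.le_opNorm fun w => by
    simpa only [show A (e.symm w) = w from e.apply_symm_apply w] using hbound (e.symm w)
  exact ⟨(ContinuousLinearEquiv.unitsEquiv 𝕜 E).symm e', rfl⟩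

theorem norm_ring_inverse_le_of_bound {A : E →L[𝕜] E} (hA : IsUnit A)
    {K : ℝ} (hK : 0 ≤ K) (hbound : ∀ z, ‖z‖ ≤ K * ‖A z‖) : ‖Ring.inverse A‖ ≤ K :=
  opNorm_le_bound _ hK fun w => by
    simpa only [apply_ring_inverse_apply hA w] using hbound (Ring.inverse A w)

end ContinuousLinearMap

end Invertibility

section StrongContinuity

variable {Ω 𝕜 E F : Type*} [TopologicalSpace Ω] [NontriviallyNormedField 𝕜]
  [NormedAddCommGroup E] [NormedSpace 𝕜 E] [NormedAddCommGroup F] [NormedSpace 𝕜 F]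

theorem Continuous.clm_apply_of_strongly_continuous {R : Ω → E →L[𝕜] F} {C : ℝ}
    (hR : ∀ z, Continuous fun x => R x z) (hC : ∀ x, ‖R x‖ ≤ C) {g : Ω → E}
    (hg : Continuous g) : Continuous fun x => R x (g x) := by
  refine continuous_iff_continuousAt.2 fun y => tendsto_iff_norm_sub_tendsto_zero.2 ?_
  have hsplit (x : Ω) : ‖R x (g x) - R y (g y)‖ ≤ C * ‖g x - g y‖ + ‖R x (g y) - R y (g y)‖ :=
    calc ‖R x (g x) - R y (g y)‖ ≤ ‖R x (g x - g y)‖ + ‖R x (g y) - R y (g y)‖ := by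
          rw [map_sub]; exact norm_sub_le_norm_sub_add_norm_sub _ _ _
      _ ≤ C * ‖g x - g y‖ + ‖R x (g y) - R y (g y)‖ := by
          gcongr; exact (R x).le_of_opNorm_le (hC x) _
  have hg₀ : Tendsto (fun x => ‖g x - g y‖) (𝓝 y) (𝓝 0) :=
    tendsto_iff_norm_sub_tendsto_zero.1 (hg.tendsto y)
  have hR₀ : Tendsto (fun x => ‖R x (g y) - R y (g y)‖) (𝓝 y) (𝓝 0) :=
    tendsto_iff_norm_sub_tendsto_zero.1 ((hR (g y)).tendsto y)
  exact squeeze_zero (fun _ => norm_nonneg _) hsplit (by simpa using (hg₀.const_mul C).add hR₀)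

theorem continuous_ring_inverse_apply {A : Ω → E →L[𝕜] E}
    (hA : ∀ z, Continuous fun x => A x z) (hunit : ∀ x, IsUnit (A x)) {C : ℝ}
    (hC : ∀ x, ‖Ring.inverse (A x)‖ ≤ C) (z : E) :
    Continuous fun x => Ring.inverse (A x) z := by
  refine continuous_iff_continuousAt.2 fun y => tendsto_iff_norm_sub_tendsto_zero.2 ?_
  set w := Ring.inverse (A y) z
  have hdiff : ∀ x, Ring.inverse (A x) z - w = Ring.inverse (A x) (A y w - A x w) := by
    intro x
    rw [map_sub, ContinuousLinearMap.ring_inverse_apply_apply (hunit x),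
      ContinuousLinearMap.apply_ring_inverse_apply (hunit y)]
  refine squeeze_zero (fun _ => norm_nonneg _)
    (fun x => (hdiff x).symm ▸ (Ring.inverse (A x)).le_of_opNorm_le (hC x) _) ?_
  have hAw : Tendsto (fun x => ‖A y w - A x w‖) (𝓝 y) (𝓝 0) := by
    simpa [norm_sub_rev] using tendsto_iff_norm_sub_tendsto_zero.1 ((hA w).tendsto y)
  simpa using hAw.const_mul C

end StrongContinuity

namespace ZeroAtInftyContinuousMap

variable {Ω E : Type*} [TopologicalSpace Ω] [NormedAddCommGroup E]

theorem norm_apply_le (s : C₀(Ω, E)) (x : Ω) : ‖s x‖ ≤ ‖s‖ :=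
  norm_toBCF_eq_norm (f := s) ▸ s.toBCF.norm_coe_le_norm x

theorem norm_le_of_forall {s : C₀(Ω, E)} {C : ℝ} (hC : 0 ≤ C) (h : ∀ x, ‖s x‖ ≤ C) :
    ‖s‖ ≤ C :=
  norm_toBCF_eq_norm (f := s) ▸ (BoundedContinuousFunction.norm_le hC).2 h

section Multiplication

variable {𝕜 F : Type*} [NontriviallyNormedField 𝕜] [NormedSpace 𝕜 E] [NormedAddCommGroup F]
  [NormedSpace 𝕜 F]

noncomputable def mulOperator (R : Ω → E →L[𝕜] F) (hR : ∀ z, Continuous fun x => R x z) {C : ℝ}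
    (hC : ∀ x, ‖R x‖ ≤ C) (s : C₀(Ω, E)) : C₀(Ω, F) where
  toFun x := R x (s x)
  continuous_toFun := .clm_apply_of_strongly_continuous hR hC s.continuous
  zero_at_infty' := by
    refine squeeze_zero_norm (fun x => (R x).le_of_opNorm_le (hC x) (s x)) ?_
    simpa using (zero_at_infty s).norm.const_mul C

noncomputable def mulOperatorCLM (R : Ω → E →L[𝕜] F) (hR : ∀ z, Continuous fun x => R x z) {C : ℝ}
    (hC : ∀ x, ‖R x‖ ≤ C) : C₀(Ω, E) →L[𝕜] C₀(Ω, F) :=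
  LinearMap.mkContinuousOfExistsBound
    { toFun := mulOperator R hR hC
      map_add' s t := by ext x; exact map_add (R x) (s x) (t x)
      map_smul' c s := by ext x; exact map_smul (R x) c (s x) }
    ⟨max C 0, fun s => norm_le_of_forall (by positivity) fun x =>
      ((R x).le_of_opNorm_le ((hC x).trans (le_max_left C 0)) (s x)).trans
        (mul_le_mul_of_nonneg_left (norm_apply_le s x) (le_max_right C 0))⟩

@[simp]
theorem mulOperatorCLM_apply (R : Ω → E →L[𝕜] F) (hR : ∀ z, Continuous fun x => R x z)
    {C : ℝ} (hC : ∀ x, ‖R x‖ ≤ C) (s : C₀(Ω, E)) (x : Ω) :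
    mulOperatorCLM R hR hC s x = R x (s x) :=
  rfl

end Multiplication

section Bump

variable [NormedSpace ℝ E]

noncomputable def smulOfHasCompactSupport (f : C(Ω, ℝ)) (hf : HasCompactSupport f) (g : C(Ω, E)) :
    C₀(Ω, E) where
  toFun x := f x • g x
  continuous_toFun := f.continuous.smul g.continuous
  zero_at_infty' := (hf.smul_right (f' := g)).is_zero_at_infty

@[simp]
theorem smulOfHasCompactSupport_apply (f : C(Ω, ℝ)) (hf : HasCompactSupport f) (g : C(Ω, E))
    (x : Ω) : smulOfHasCompactSupport f hf g x = f x • g x :=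
  rfl

theorem norm_smulOfHasCompactSupport_le {f : C(Ω, ℝ)} (hf : HasCompactSupport f)
    (hf01 : ∀ x, f x ∈ Icc (0 : ℝ) 1) {g : C(Ω, E)} {c : ℝ} (hc : 0 ≤ c)
    (hg : ∀ x, f x ≠ 0 → ‖g x‖ ≤ c) : ‖smulOfHasCompactSupport f hf g‖ ≤ c := by
  refine norm_le_of_forall hc fun x => ?_
  rw [smulOfHasCompactSupport_apply, norm_smul, Real.norm_of_nonneg (hf01 x).1]
  by_cases hfx : f x = 0
  · simp [hfx, hc]
  · exact (mul_le_of_le_one_left (norm_nonneg _) (hf01 x).2).trans (hg x hfx)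

variable [T2Space Ω] [LocallyCompactSpace Ω]

theorem exists_bump {x₀ : Ω} {U : Set Ω} (hU : IsOpen U) (hx₀ : x₀ ∈ U) :
    ∃ f : C(Ω, ℝ), HasCompactSupport f ∧ f x₀ = 1 ∧ (∀ x, f x ∈ Icc (0 : ℝ) 1) ∧
      ∀ x, f x ≠ 0 → x ∈ U := by
  obtain ⟨f, hf1, hf0, hfc, hf01⟩ := exists_continuous_one_zero_of_isCompact
    isCompact_singleton hU.isClosed_compl (disjoint_compl_right_iff_subset.2 (by simpa))
  exact ⟨f, hfc, hf1 rfl, hf01, fun x hx => by_contra fun hxU => hx (hf0 hxU)⟩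

theorem exists_apply_eq (x₀ : Ω) (w : E) : ∃ s : C₀(Ω, E), s x₀ = w := by
  obtain ⟨f, hfc, hfx₀, -⟩ := exists_bump isOpen_univ (mem_univ x₀)
  exact ⟨smulOfHasCompactSupport f hfc (.const Ω w), by simp [hfx₀]⟩

end Bump

end ZeroAtInftyContinuousMap

open ZeroAtInftyContinuousMap

section MultiplicationOperator

variable {Ω E : Type*} [TopologicalSpace Ω] [NormedAddCommGroup E] [NormedSpace ℂ E]
  {φ : Ω → E →L[ℂ] E} {lam : ℂ}

theorem exists_mulOperator_inverse (hφ : ∀ z : E, Continuous fun x => φ x z)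
    (hres : ∀ x, lam ∈ resolventSet ℂ (φ x)) {C : ℝ}
    (hC : ∀ x, ‖Ring.inverse (algebraMap ℂ (E →L[ℂ] E) lam - φ x)‖ ≤ C) :
    ∃ T : C₀(Ω, E) →L[ℂ] C₀(Ω, E),
      (∀ s u : C₀(Ω, E), (∀ x, u x = φ x (s x)) → T (lam • s - u) = s) ∧
      (∀ s : C₀(Ω, E), ∃ u : C₀(Ω, E), (∀ x, u x = φ x (T s x)) ∧ lam • T s - u = s) := by
  have hunit (x : Ω) : IsUnit (algebraMap ℂ (E →L[ℂ] E) lam - φ x) :=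
    spectrum.mem_resolventSet_iff.1 (hres x)
  have hA (z : E) : Continuous fun x => (algebraMap ℂ (E →L[ℂ] E) lam - φ x) z := by
    simp only [_root_.sub_apply, ContinuousLinearMap.algebraMap_apply]
    exact continuous_const.sub (hφ z)
  set T := mulOperatorCLM _ (continuous_ring_inverse_apply hA hunit hC) hC
  refine ⟨T, fun s u hu => ?_, fun s => ⟨lam • T s - s, fun x => ?_, sub_sub_cancel _ _⟩⟩
  · ext x
    simpa [T, hu] using
      ContinuousLinearMap.ring_inverse_apply_apply (hunit x) (s x)
  · have hx := ContinuousLinearMap.apply_ring_inverse_apply (hunit x) (s x)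
    rw [_root_.sub_apply, ContinuousLinearMap.algebraMap_apply] at hx
    exact (congrArg (lam • T s x - ·) hx).symm.trans (sub_sub_cancel _ _)

variable [T2Space Ω] [LocallyCompactSpace Ω]

theorem norm_le_opNorm_mul_of_leftInverse (hφ : ∀ z : E, Continuous fun x => φ x z)
    {T : C₀(Ω, E) →L[ℂ] C₀(Ω, E)}
    (hT : ∀ s u : C₀(Ω, E), (∀ x, u x = φ x (s x)) → T (lam • s - u) = s) (x₀ : Ω) (z : E) :
    ‖z‖ ≤ ‖T‖ * ‖lam • z - φ x₀ z‖ := by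
  set b := ‖lam • z - φ x₀ z‖
  have hAz : Continuous fun x => lam • z - φ x z := continuous_const.sub (hφ z)
  have approx : ∀ δ > 0, ‖z‖ ≤ ‖T‖ * (b + δ) := by
    intro δ hδ
    obtain ⟨f, hfc, hfx₀, hf01, hfU⟩ := exists_bump (x₀ := x₀)
      (isOpen_lt hAz.norm (continuous_const (y := b + δ))) (lt_add_of_pos_right b hδ)
    set s := smulOfHasCompactSupport f hfc (.const Ω z)
    set u := smulOfHasCompactSupport f hfc ⟨_, hφ z⟩
    have hv : lam • s - u = smulOfHasCompactSupport f hfc ⟨_, hAz⟩ := by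
      ext x
      simp [s, u, smul_sub, smul_comm lam (f x) z]
    have hvb : ‖lam • s - u‖ ≤ b + δ :=
      hv ▸ norm_smulOfHasCompactSupport_le hfc hf01 (by positivity) fun x hx => (hfU x hx).le
    have hTv : T (lam • s - u) = s := hT s u fun x => by simp [s, u]
    calc ‖z‖ = ‖T (lam • s - u) x₀‖ := by simp [hTv, s, hfx₀]
      _ ≤ ‖T‖ * ‖lam • s - u‖ := (norm_apply_le _ _).trans (T.le_opNorm _)
      _ ≤ ‖T‖ * (b + δ) := by gcongr
  have hlim : Tendsto (fun δ => ‖T‖ * (b + δ)) (𝓝 0) (𝓝 (‖T‖ * (b + 0))) :=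
    tendsto_const_nhds.mul (tendsto_const_nhds.add tendsto_id)
  rw [add_zero] at hlim
  exact ge_of_tendsto (hlim.mono_left (nhdsWithin_le_nhds (s := Ioi 0)))
    (eventually_nhdsWithin_of_forall approx)

theorem surjective_of_rightInverse {T : C₀(Ω, E) →L[ℂ] C₀(Ω, E)}
    (hT : ∀ s : C₀(Ω, E), ∃ u : C₀(Ω, E), (∀ x, u x = φ x (T s x)) ∧ lam • T s - u = s)
    (x₀ : Ω) : Function.Surjective (algebraMap ℂ (E →L[ℂ] E) lam - φ x₀) := by
  intro w
  obtain ⟨s, rfl⟩ := ZeroAtInftyContinuousMap.exists_apply_eq x₀ w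
  obtain ⟨u, hu, hTs⟩ := hT s
  exact ⟨T s x₀, by simpa [hu] using congrArg (· x₀) hTs⟩

theorem mem_resolventSet_and_norm_ring_inverse_le (hφ : ∀ z : E, Continuous fun x => φ x z)
    {T : C₀(Ω, E) →L[ℂ] C₀(Ω, E)}
    (hT₁ : ∀ s u : C₀(Ω, E), (∀ x, u x = φ x (s x)) → T (lam • s - u) = s)
    (hT₂ : ∀ s : C₀(Ω, E), ∃ u : C₀(Ω, E), (∀ x, u x = φ x (T s x)) ∧ lam • T s - u = s)
    (x : Ω) : lam ∈ resolventSet ℂ (φ x) ∧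
      ‖Ring.inverse (algebraMap ℂ (E →L[ℂ] E) lam - φ x)‖ ≤ ‖T‖ := by
  have hbound (z : E) : ‖z‖ ≤ ‖T‖ * ‖(algebraMap ℂ (E →L[ℂ] E) lam - φ x) z‖ := by
    simpa using norm_le_opNorm_mul_of_leftInverse hφ hT₁ x z
  have hunit := ContinuousLinearMap.isUnit_of_surjective_of_bound
    (surjective_of_rightInverse hT₂ x) hbound
  exact ⟨spectrum.mem_resolventSet_iff.2 hunit,
    ContinuousLinearMap.norm_ring_inverse_le_of_bound hunit (norm_nonneg T) hbound⟩

end MultiplicationOperator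

theorem multiplication_operator_resolvent_set_general (Ω E : Type*) [TopologicalSpace Ω]
    [LocallyCompactSpace Ω] [T2Space Ω] [NormedAddCommGroup E] [NormedSpace ℂ E]
    (φ : Ω → (E →L[ℂ] E)) (hφ : ∀ z : E, Continuous fun x => φ x z)
    (lam : ℂ) :
    (∃ T : C₀(Ω, E) →L[ℂ] C₀(Ω, E),
      -- `T ((λ - M_φ) s) = s` for all `s ∈ D(M_φ)`
      (∀ s u : C₀(Ω, E), (∀ x, u x = φ x (s x)) → T (lam • s - u) = s) ∧
      -- `T s ∈ D(M_φ)` and `(λ - M_φ) (T s) = s` for all `s`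
      (∀ s : C₀(Ω, E), ∃ u : C₀(Ω, E), (∀ x, u x = φ x (T s x)) ∧ lam • T s - u = s)) ↔
    ((∀ x, lam ∈ resolventSet ℂ (φ x)) ∧
      ∃ C : ℝ, ∀ x, ‖Ring.inverse (algebraMap ℂ (E →L[ℂ] E) lam - φ x)‖ ≤ C) := by
  constructor
  · rintro ⟨T, hT₁, hT₂⟩
    have h := mem_resolventSet_and_norm_ring_inverse_le hφ hT₁ hT₂
    exact ⟨fun x => (h x).1, ‖T‖, fun x => (h x).2⟩
  · rintro ⟨hres, C, hC⟩
    exact exists_mulOperator_inverse hφ hres hC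

/-- Spectral characterization of the multiplication operator `(M_φ, D(M_φ))` on
`C₀(Ω, E)`: a complex number `λ` belongs to the resolvent set of `M_φ` (that is,
`λ - M_φ : D(M_φ) → C₀(Ω, E)` has a bounded everywhere-defined two-sided inverse)
if and only if `λ ∈ ρ(φ x)` for every `x` and `sup_x ‖(λ - φ x)⁻¹‖ < ∞`. -/
theorem multiplication_operator_resolvent_set (Ω E : Type*) [TopologicalSpace Ω]
    [LocallyCompactSpace Ω] [T2Space Ω] [NormedAddCommGroup E] [NormedSpace ℂ E]
    [CompleteSpace E] (φ : Ω → (E →L[ℂ] E)) (hφ : ∀ z : E, Continuous fun x => φ x z)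
    (lam : ℂ) :
    (∃ T : C₀(Ω, E) →L[ℂ] C₀(Ω, E),
      -- `T ((λ - M_φ) s) = s` for all `s ∈ D(M_φ)`
      (∀ s u : C₀(Ω, E), (∀ x, u x = φ x (s x)) → T (lam • s - u) = s) ∧
      -- `T s ∈ D(M_φ)` and `(λ - M_φ) (T s) = s` for all `s`
      (∀ s : C₀(Ω, E), ∃ u : C₀(Ω, E), (∀ x, u x = φ x (T s x)) ∧ lam • T s - u = s)) ↔
    ((∀ x, lam ∈ resolventSet ℂ (φ x)) ∧
      ∃ C : ℝ, ∀ x, ‖Ring.inverse (algebraMap ℂ (E →L[ℂ] E) lam - φ x)‖ ≤ C) :=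
  multiplication_operator_resolvent_set_general Ω E φ hφ lam
end

section
/- Let φ : Ω → L(E) be strongly continuous generating the multiplication semigroup T_φ(t)s = e^{tφ(·)}s(·) on C_0(Ω, E), assumed to be a strongly continuous semigroup of bounded operators. Then the infinitesimal generator of (T_φ(t))_{t≥0} equals the multiplication operator (M_φ, D(M_φ)): for s ∈ C_0(Ω, E), the limit lim_{t↓0} (T_φ(t)s − s)/t exists in C_0(Ω, E) if and only if s ∈ D(M_φ) = { s : φ(·)s(·) ∈ C_0(Ω, E) }, in which case the limit equals φ(·)s(·). -/
/-!
Pointwise, `t⁻¹ (e^{tφ(x)} s(x) - s(x))` tends to `φ(x) s(x)`, so a limit in `C₀(Ω, E)`, being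
uniform, can only be `φ(·)s(·)`. Conversely, if `u = φ(·)s(·)` lies in `C₀(Ω, E)`, the mean value
inequality applied to `r ↦ e^{rφ(x)} s(x) - r u(x)` on `[0, t]` bounds the distance of the
difference quotient to `u(x)` by `sup_{0 < r ≤ t} ‖e^{rφ(x)} u(x) - u(x)‖`, uniformly in `x`, and
this tends to `0` by strong continuity of the semigroup at `u`.
-/

open ZeroAtInfty NormedSpace Filter Topology Set

section ExpSmulApply

variable {E : Type*} [NormedAddCommGroup E] [NormedSpace ℝ E] [CompleteSpace E]

theorem hasDerivAt_exp_smul_apply (A : E →L[ℝ] E) (z : E) (r : ℝ) :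
    HasDerivAt (fun t : ℝ => exp (t • A) z) (exp (r • A) (A z)) r := by
  simpa [Function.comp_def] using
    (ContinuousLinearMap.apply ℝ E z).hasFDerivAt.comp_hasDerivAt r (hasDerivAt_exp_smul_const A r)

theorem tendsto_inv_smul_exp_smul_apply_sub (A : E →L[ℝ] E) (z : E) :
    Tendsto (fun t : ℝ => t⁻¹ • (exp (t • A) z - z)) (𝓝[>] (0 : ℝ)) (𝓝 (A z)) := by
  simpa using (hasDerivAt_exp_smul_apply A z 0).tendsto_slope_zero_right

theorem norm_inv_smul_exp_smul_apply_sub_sub_le (A : E →L[ℝ] E) (z : E) {t C : ℝ} (ht : 0 < t)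
    (hC : ∀ r ∈ Ioc 0 t, ‖exp (r • A) (A z) - A z‖ ≤ C) :
    ‖t⁻¹ • (exp (t • A) z - z) - A z‖ ≤ C := by
  have hC0 : 0 ≤ C := (norm_nonneg _).trans (hC t ⟨ht, le_rfl⟩)
  have hderiv : ∀ r ∈ Icc 0 t, HasDerivWithinAt (fun r : ℝ => exp (r • A) z - r • A z)
      (exp (r • A) (A z) - A z) (Icc 0 t) r := fun r _ =>
    ((hasDerivAt_exp_smul_apply A z r).sub
      (by simpa using (hasDerivAt_id r).smul_const (A z))).hasDerivWithinAt
  have hbound : ∀ r ∈ Icc 0 t, ‖exp (r • A) (A z) - A z‖ ≤ C := by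
    rintro r ⟨hr0, hrt⟩
    rcases hr0.eq_or_lt with rfl | hr0
    · simpa using hC0
    · exact hC r ⟨hr0, hrt⟩
  have hmvt : ‖exp (t • A) z - t • A z - z‖ ≤ C * t := by
    simpa [abs_of_pos ht] using (convex_Icc 0 t).norm_image_sub_le_of_norm_hasDerivWithin_le
      hderiv hbound (left_mem_Icc.2 ht.le) (right_mem_Icc.2 ht.le)
  calc ‖t⁻¹ • (exp (t • A) z - z) - A z‖ = ‖t⁻¹ • (exp (t • A) z - t • A z - z)‖ := by
        congr 1; match_scalars <;> field_simp
    _ = t⁻¹ * ‖exp (t • A) z - t • A z - z‖ := by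
        rw [norm_smul, Real.norm_of_nonneg (inv_nonneg.2 ht.le)]
    _ ≤ t⁻¹ * (C * t) := by gcongr
    _ = C := by field_simp

theorem TendstoUniformly.inv_smul_exp_smul_apply_sub {ι : Type*} {A : ι → E →L[ℝ] E} {z : ι → E}
    (h : TendstoUniformly (fun r x => exp (r • A x) (A x (z x))) (fun x => A x (z x))
      (𝓝[>] (0 : ℝ))) :
    TendstoUniformly (fun t x => t⁻¹ • (exp (t • A x) (z x) - z x)) (fun x => A x (z x))
      (𝓝[>] (0 : ℝ)) := by
  rw [Metric.tendstoUniformly_iff] at h ⊢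
  intro ε hε
  obtain ⟨δ, hδ, hsub⟩ := mem_nhdsGT_iff_exists_Ioo_subset.1 (h (ε / 2) (half_pos hε))
  filter_upwards [Ioo_mem_nhdsGT hδ] with t ht x
  rw [dist_comm, dist_eq_norm]
  refine (norm_inv_smul_exp_smul_apply_sub_sub_le (A x) (z x) ht.1 fun r hr => ?_).trans_lt
    (half_lt_self hε)
  rw [← dist_eq_norm, dist_comm]
  exact (hsub ⟨hr.1, hr.2.trans_lt ht.2⟩ x).le

end ExpSmulApply

theorem multiplication_semigroup_generator_general (Ω E : Type*) [TopologicalSpace Ω]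
    [NormedAddCommGroup E] [NormedSpace ℝ E]
    [CompleteSpace E] (φ : Ω → (E →L[ℝ] E))
    (T : ℝ → C₀(Ω, E) →L[ℝ] C₀(Ω, E))
    (hT : ∀ t : ℝ, 0 ≤ t → ∀ s : C₀(Ω, E), ∀ x, T t s x = exp (t • φ x) (s x))
    (hsc : ∀ s : C₀(Ω, E), Tendsto (fun t : ℝ => T t s) (𝓝[>] 0) (𝓝 s)) :
    ∀ s : C₀(Ω, E),
      ((∃ L : C₀(Ω, E),
          Tendsto (fun t : ℝ => t⁻¹ • (T t s - s)) (𝓝[>] 0) (𝓝 L)) ↔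
        (∃ u : C₀(Ω, E), ∀ x, u x = φ x (s x))) ∧
      (∀ u : C₀(Ω, E), (∀ x, u x = φ x (s x)) →
        Tendsto (fun t : ℝ => t⁻¹ • (T t s - s)) (𝓝[>] 0) (𝓝 u)) := by
  intro s
  have hTu : ∀ u : C₀(Ω, E),
      TendstoUniformly (fun r x => exp (r • φ x) (u x)) u (𝓝[>] (0 : ℝ)) := by
    intro u
    refine (tendstoUniformly_congr ?_).1
      (ZeroAtInftyContinuousMap.tendsto_iff_tendstoUniformly.1 (hsc u))
    filter_upwards [self_mem_nhdsWithin] with r hr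
    exact funext (hT r hr.le u)
  have hquot : (fun t : ℝ => ⇑(t⁻¹ • (T t s - s))) =ᶠ[𝓝[>] 0]
      fun t x => t⁻¹ • (exp (t • φ x) (s x) - s x) := by
    filter_upwards [self_mem_nhdsWithin] with t ht
    ext x
    simp [hT t ht.le]
  have hgen : ∀ u : C₀(Ω, E), (∀ x, u x = φ x (s x)) →
      Tendsto (fun t : ℝ => t⁻¹ • (T t s - s)) (𝓝[>] 0) (𝓝 u) := by
    intro u hu
    rw [ZeroAtInftyContinuousMap.tendsto_iff_tendstoUniformly, tendstoUniformly_congr hquot,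
      funext hu]
    refine TendstoUniformly.inv_smul_exp_smul_apply_sub ?_
    simpa only [← hu] using hTu u
  refine ⟨⟨fun ⟨L, hL⟩ => ⟨L, fun x => ?_⟩, fun ⟨u, hu⟩ => ⟨u, hgen u hu⟩⟩, hgen⟩
  have hLx := ((tendstoUniformly_congr hquot).1
    (ZeroAtInftyContinuousMap.tendsto_iff_tendstoUniformly.1 hL)).tendsto_at x
  exact tendsto_nhds_unique hLx (tendsto_inv_smul_exp_smul_apply_sub (φ x) (s x))

/-- The infinitesimal generator of the multiplication semigroup
`T_φ(t)s = e^{tφ(·)}s(·)` on `C₀(Ω, E)` is the multiplication operator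
`(M_φ, D(M_φ))`: for `s ∈ C₀(Ω, E)` the limit `lim_{t↓0} (T_φ(t)s − s)/t` exists in
`C₀(Ω, E)` iff `s ∈ D(M_φ)`, in which case the limit equals `φ(·)s(·)`. -/
theorem multiplication_semigroup_generator (Ω E : Type*) [TopologicalSpace Ω]
    [LocallyCompactSpace Ω] [T2Space Ω] [NormedAddCommGroup E] [NormedSpace ℝ E]
    [CompleteSpace E] (φ : Ω → (E →L[ℝ] E)) (hφ : ∀ z : E, Continuous fun x => φ x z)
    (T : ℝ → C₀(Ω, E) →L[ℝ] C₀(Ω, E))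
    (hT : ∀ t : ℝ, 0 ≤ t → ∀ s : C₀(Ω, E), ∀ x, T t s x = exp (t • φ x) (s x))
    (hsc : ∀ s : C₀(Ω, E), Tendsto (fun t : ℝ => T t s) (𝓝[>] 0) (𝓝 s)) :
    ∀ s : C₀(Ω, E),
      ((∃ L : C₀(Ω, E),
          Tendsto (fun t : ℝ => t⁻¹ • (T t s - s)) (𝓝[>] 0) (𝓝 L)) ↔
        (∃ u : C₀(Ω, E), ∀ x, u x = φ x (s x))) ∧
      (∀ u : C₀(Ω, E), (∀ x, u x = φ x (s x)) →
        Tendsto (fun t : ℝ => t⁻¹ • (T t s - s)) (𝓝[>] 0) (𝓝 u)) :=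
  multiplication_semigroup_generator_general Ω E φ T hT hsc
end
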